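/- Cassini identity for Horadam quaternions: for every natural number n ≥ 1, Gₙ₋₁·Gₙ₊₁ − Gₙ² = A·B·(αβ)ⁿ⁻¹·(β·(α̲·β̲) − α·(β̲·α̲))/(α − β), where α̲·β̲ and β̲·α̲ are quaternion products (which need not be equal). -/

import Mathlib

/-!
Both roots of `x² = p x + q` give solutions `αⁿ`, `βⁿ` of the Horadam recurrence, so
`(α - β) wₙ = A αⁿ - B βⁿ` and, componentwise, `(α - β) Gₙ = A αⁿ α̲ - B βⁿ β̲`. Expanding
`Gₙ₋₁ Gₙ₊₁ - Gₙ²` in this form, the `α̲²` and `β̲²` terms cancel and only the mixed products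
survive; since quaternions do not commute, `α̲ β̲` and `β̲ α̲` appear with different coefficients.
-/

open Quaternion

/-- The Horadam sequence `w(a,b;p,q)`: `w₀ = a`, `w₁ = b`,
`wₙ = p·wₙ₋₁ + q·wₙ₋₂` for `n ≥ 2`. -/
def horadam (a b p q : ℝ) : ℕ → ℝ
  | 0 => a
  | 1 => b
  | n + 2 => p * horadam a b p q (n + 1) + q * horadam a b p q n

/-- The `n`-th Horadam quaternion `Gₙ = wₙ + wₙ₊₁·i + wₙ₊₂·j + wₙ₊₃·k`. -/
def horadamQ (a b p q : ℝ) (n : ℕ) : ℍ[ℝ] :=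
  ⟨horadam a b p q n, horadam a b p q (n + 1), horadam a b p q (n + 2), horadam a b p q (n + 3)⟩

theorem horadam_binet {a b p q α β : ℝ} (hα : α ^ 2 = p * α + q) (hβ : β ^ 2 = p * β + q) :
    ∀ n, (α - β) * horadam a b p q n = (b - a * β) * α ^ n - (b - a * α) * β ^ n
  | 0 => by simp only [horadam]; ring
  | 1 => by simp only [horadam]; ring
  | n + 2 => by
    simp only [horadam, mul_add, mul_left_comm (α - β), horadam_binet hα hβ n,
      horadam_binet hα hβ (n + 1)]
    linear_combination (b - a * α) * β ^ n * hβ - (b - a * β) * α ^ n * hα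

def quatOfPowers (x : ℝ) : ℍ[ℝ] := ⟨1, x, x ^ 2, x ^ 3⟩

theorem horadamQ_binet {a b p q α β : ℝ} (hα : α ^ 2 = p * α + q) (hβ : β ^ 2 = p * β + q)
    (n : ℕ) : (α - β) • horadamQ a b p q n =
      ((b - a * β) * α ^ n) • quatOfPowers α - ((b - a * α) * β ^ n) • quatOfPowers β := by
  ext <;> simp only [Quaternion.re_sub, Quaternion.imI_sub, Quaternion.imJ_sub,
    Quaternion.imK_sub, Quaternion.re_smul, Quaternion.imI_smul, Quaternion.imJ_smul,
    Quaternion.imK_smul, smul_eq_mul] <;>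
    simp only [horadamQ, quatOfPowers, horadam_binet hα hβ] <;> ring

theorem binet_cassini {R A : Type*} [CommRing R] [Ring A] [Algebra R A]
    {c d α β : R} {u v : A} {X : ℕ → A}
    (hX : ∀ k, X k = (c * α ^ k) • u - (d * β ^ k) • v) (m : ℕ) :
    X m * X (m + 2) - X (m + 1) ^ 2 =
      (c * d * (α * β) ^ m * (α - β)) • (β • (u * v) - α • (v * u)) := by
  simp only [hX, sq, sub_mul, mul_sub, smul_mul_smul_comm, smul_sub, smul_smul]
  match_scalars <;> ring

theorem binet_cassini_of_smul {K A : Type*} [Field K] [Ring A] [Algebra K A]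
    {c d α β : K} {u v : A} {X : ℕ → A} (hαβ : α ≠ β)
    (hX : ∀ k, (α - β) • X k = (c * α ^ k) • u - (d * β ^ k) • v) (m : ℕ) :
    X m * X (m + 2) - X (m + 1) ^ 2 =
      (α - β)⁻¹ • (c * d * (α * β) ^ m) • (β • (u * v) - α • (v * u)) := by
  have hne : (α - β) ^ 2 ≠ 0 := pow_ne_zero 2 (sub_ne_zero.mpr hαβ)
  apply smul_right_injective A hne
  have h := binet_cassini (X := fun k => (α - β) • X k) hX m
  simp only [smul_mul_smul_comm, smul_pow, ← sq, ← smul_sub] at h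
  dsimp only
  rw [h, smul_smul, smul_smul]
  congr 1
  field_simp

/-- Cassini identity for Horadam quaternions: for `n ≥ 1`,
`Gₙ₋₁·Gₙ₊₁ − Gₙ² = A·B·(αβ)ⁿ⁻¹·(β·(α̲·β̲) − α·(β̲·α̲))/(α − β)`. -/
theorem horadamQ_cassini (a b p q : ℝ) (hpq : p ^ 2 + 4 * q > 0)
    (α β A B : ℝ)
    (hα : α = (p + Real.sqrt (p ^ 2 + 4 * q)) / 2)
    (hβ : β = (p - Real.sqrt (p ^ 2 + 4 * q)) / 2)
    (hA : A = b - a * β) (hB : B = b - a * α)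
    (αq βq : ℍ[ℝ])
    (hαq : αq = ⟨1, α, α ^ 2, α ^ 3⟩) (hβq : βq = ⟨1, β, β ^ 2, β ^ 3⟩) :
    ∀ n : ℕ, 1 ≤ n →
      horadamQ a b p q (n - 1) * horadamQ a b p q (n + 1) - (horadamQ a b p q n) ^ 2 =
        ((A * B * (α * β) ^ (n - 1)) • (β • (αq * βq) - α • (βq * αq))) /
          ((α - β : ℝ) : ℍ[ℝ]) := by
  intro n hn
  obtain ⟨m, rfl⟩ : ∃ m, n = m + 1 := ⟨n - 1, by omega⟩
  have hsqrt := Real.sq_sqrt hpq.le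
  have hαβ : α ≠ β := by
    rw [← sub_ne_zero, show α - β = √(p ^ 2 + 4 * q) by rw [hα, hβ]; ring]
    exact (Real.sqrt_pos.mpr hpq).ne'
  have hαroot : α ^ 2 = p * α + q := by rw [hα]; linear_combination hsqrt / 4
  have hβroot : β ^ 2 = p * β + q := by rw [hβ]; linear_combination hsqrt / 4
  subst hA hB hαq hβq
  rw [div_eq_mul_inv, ← Quaternion.coe_inv, Quaternion.mul_coe_eq_smul, Nat.add_sub_cancel]
  exact binet_cassini_of_smul hαβ (horadamQ_binet hαroot hβroot) m
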